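/- The function W : (ℂ∖{0})² → ℂ defined by W(y_1, y_2) = 3y_1 + y_2 + 4·y_1^{−1}y_2 + y_1^{−2}y_2 + 5·y_1^{−1} + y_2^{−1} + 6·y_1 y_2^{−1} + y_1^{2} y_2^{−1} has exactly 8 critical points, and each of these critical points is nondegenerate. -/

import Mathlib

/-- The potential function of the monotone fiber `L(1.5,2)` in `X̂₁₀` with the chosen bulk deformation (energy factor dropped). -/
noncomputable def W : ℂ → ℂ → ℂ := fun y₁ y₂ =>
  3 * y₁ + y₂ + 4 * y₁⁻¹ * y₂ + (y₁ ^ 2)⁻¹ * y₂ + 5 * y₁⁻¹ + y₂⁻¹ + 6 * y₁ * y₂⁻¹ + y₁ ^ 2 * y₂⁻¹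

/-- A point of `(ℂ∖{0})²` is a critical point of `W` if both partial
derivatives of `W` vanish there. -/
def IsCritPt (p : ℂ × ℂ) : Prop :=
  p.1 ≠ 0 ∧ p.2 ≠ 0 ∧
    deriv (fun z => W z p.2) p.1 = 0 ∧ deriv (fun z => W p.1 z) p.2 = 0

/-- The Hessian determinant
`(∂²W/∂y₁²)(∂²W/∂y₂²) - (∂²W/∂y₁∂y₂)²` of `W` at a point. -/
noncomputable def hessDet (p : ℂ × ℂ) : ℂ :=
  deriv (deriv (fun z => W z p.2)) p.1 * deriv (deriv (fun z => W p.1 z)) p.2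
    - (deriv (fun w => deriv (fun z => W z w) p.1) p.2) ^ 2

/-!
Write `A = y₁² + 4y₁ + 1`, `B = y₁² + 6y₁ + 1`, `D = 3y₁² - 5` and `M = 2(y₁² - 1)(y₁² + 5y₁ + 1)`.
Clearing denominators, the critical equations become `P₁ = P₂ = 0`, where `P₂ = y₂²A - y₁²B`.
The combination `AP₁ + (4y₁ + 2)P₂ = y₁(y₂AD + y₁M)` is linear in `y₂`, and substituting its root
into `P₂` leaves the eliminant `Q = M² - ABD²` of degree 8. A Bézout certificate shows that `Q` is
coprime to `Q'`, so `Q` has 8 simple roots and there are exactly 8 critical points. Differentiating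
the elimination identities at a critical point gives `Hess = -Q'(y₁) / (y₁²y₂³AD)`, which is nonzero
because the roots of `Q` are simple.
-/

open Polynomial

lemma Polynomial.separable_of_mul_add_mul_derivative_eq_C {K : Type*} [Field K] {p a b : K[X]}
    {c : K} (hc : c ≠ 0) (h : a * p + b * derivative p = C c) : p.Separable :=
  ⟨C c⁻¹ * a, C c⁻¹ * b, by rw [mul_assoc, mul_assoc, ← mul_add, h, ← C_mul, inv_mul_cancel₀ hc, C_1]⟩

lemma deriv_W_fst (y : ℂ) {x : ℂ} (hx : x ≠ 0) :
    deriv (fun z => W z y) x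
      = 3 - 4*y*(x^2)⁻¹ - 2*y*(x^3)⁻¹ - 5*(x^2)⁻¹ + 6*y⁻¹ + 2*x*y⁻¹ := by
  have h : HasDerivAt (fun z => W z y)
      (3*1 + 0 + (4 * -(x^2)⁻¹) * y + (-(↑2 * x ^ 1) / (x^2)^2) * y + 5 * -(x^2)⁻¹ + 0
        + (6*1) * y⁻¹ + (↑2 * x ^ 1) * y⁻¹) x :=
    ((((((((hasDerivAt_id x).const_mul 3).add (hasDerivAt_const x y)).add
      (((hasDerivAt_inv hx).const_mul 4).mul_const y)).add
      (((hasDerivAt_pow 2 x).inv (pow_ne_zero 2 hx)).mul_const y)).add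
      ((hasDerivAt_inv hx).const_mul 5)).add (hasDerivAt_const x y⁻¹)).add
      (((hasDerivAt_id x).const_mul 6).mul_const y⁻¹)).add
      ((hasDerivAt_pow 2 x).mul_const y⁻¹)
  rw [h.deriv]
  field_simp
  ring

lemma deriv_W_snd (x : ℂ) {y : ℂ} (hy : y ≠ 0) :
    deriv (fun z => W x z) y
      = 1 + 4*x⁻¹ + (x^2)⁻¹ - (y^2)⁻¹ - 6*x*(y^2)⁻¹ - x^2*(y^2)⁻¹ := by
  have h : HasDerivAt (fun z => W x z)
      (0 + 1 + 4 * x⁻¹ * 1 + (x^2)⁻¹ * 1 + 0 + -(y^2)⁻¹ + 6 * x * -(y^2)⁻¹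
        + x^2 * -(y^2)⁻¹) y :=
    (((((((hasDerivAt_const y (3*x)).add (hasDerivAt_id y)).add
      ((hasDerivAt_id y).const_mul (4*x⁻¹))).add
      ((hasDerivAt_id y).const_mul ((x^2)⁻¹))).add (hasDerivAt_const y (5*x⁻¹))).add
      (hasDerivAt_inv hy)).add ((hasDerivAt_inv hy).const_mul (6*x))).add
      ((hasDerivAt_inv hy).const_mul (x^2))
  rw [h.deriv]
  ring

lemma deriv_deriv_W_fst (y : ℂ) {x : ℂ} (hx : x ≠ 0) :
    deriv (deriv (fun z => W z y)) x
      = 8*y*(x^3)⁻¹ + 6*y*(x^4)⁻¹ + 10*(x^3)⁻¹ + 2*y⁻¹ := by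
  have hev : deriv (fun z => W z y) =ᶠ[nhds x]
      fun z => 3 - 4*y*(z^2)⁻¹ - 2*y*(z^3)⁻¹ - 5*(z^2)⁻¹ + 6*y⁻¹ + 2*z*y⁻¹ := by
    filter_upwards [compl_singleton_mem_nhds hx] with z hz
    exact deriv_W_fst y hz
  have t2 := (hasDerivAt_pow 2 x).inv (pow_ne_zero 2 hx)
  have t3 := (hasDerivAt_pow 3 x).inv (pow_ne_zero 3 hx)
  have h := (((((hasDerivAt_const x (3 : ℂ)).sub (t2.const_mul (4*y))).sub
    (t3.const_mul (2*y))).sub (t2.const_mul 5)).add (hasDerivAt_const x (6*y⁻¹))).add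
    (((hasDerivAt_id x).const_mul 2).mul_const y⁻¹)
  rw [hev.deriv_eq]
  refine h.deriv.trans ?_
  field_simp
  ring

lemma deriv_deriv_W_snd (x : ℂ) {y : ℂ} (hy : y ≠ 0) :
    deriv (deriv (fun z => W x z)) y = 2*(y^3)⁻¹ + 12*x*(y^3)⁻¹ + 2*x^2*(y^3)⁻¹ := by
  have hev : deriv (fun z => W x z) =ᶠ[nhds y]
      fun w => 1 + 4*x⁻¹ + (x^2)⁻¹ - (w^2)⁻¹ - 6*x*(w^2)⁻¹ - x^2*(w^2)⁻¹ := by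
    filter_upwards [compl_singleton_mem_nhds hy] with w hw
    exact deriv_W_snd x hw
  have t2 := (hasDerivAt_pow 2 y).inv (pow_ne_zero 2 hy)
  have h := (((hasDerivAt_const y (1 + 4*x⁻¹ + (x^2)⁻¹)).sub t2).sub
    (t2.const_mul (6*x))).sub (t2.const_mul (x^2))
  rw [hev.deriv_eq]
  refine h.deriv.trans ?_
  field_simp
  ring

lemma deriv_deriv_W_fst_snd {x y : ℂ} (hx : x ≠ 0) (hy : y ≠ 0) :
    deriv (fun w => deriv (fun z => W z w) x) y
      = -4*(x^2)⁻¹ - 2*(x^3)⁻¹ - 6*(y^2)⁻¹ - 2*x*(y^2)⁻¹ := by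
  have hfun : (fun w => deriv (fun z => W z w) x)
      = fun w => 3 - 4*w*(x^2)⁻¹ - 2*w*(x^3)⁻¹ - 5*(x^2)⁻¹ + 6*w⁻¹ + 2*x*w⁻¹ :=
    funext fun w => deriv_W_fst w hx
  have h := (((((hasDerivAt_const y (3 : ℂ)).sub
    (((hasDerivAt_id y).const_mul 4).mul_const ((x^2)⁻¹))).sub
    (((hasDerivAt_id y).const_mul 2).mul_const ((x^3)⁻¹))).sub
    (hasDerivAt_const y (5*(x^2)⁻¹))).add ((hasDerivAt_inv hy).const_mul 6)).add
    ((hasDerivAt_inv hy).const_mul (2*x))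
  rw [hfun]
  refine h.deriv.trans ?_
  ring

-- `x³y · ∂W/∂y₁ (x, y)` and `x²y² · ∂W/∂y₂ (x, y)`
def partialNum₁ (x y : ℂ) : ℂ := 2*x^4 + 3*x^3*y + 6*x^3 - 4*x*y^2 - 5*x*y - 2*y^2

def partialNum₂ (x y : ℂ) : ℂ := y^2*(x^2+4*x+1) - x^2*(x^2+6*x+1)

lemma isCritPt_iff {x y : ℂ} :
    IsCritPt (x, y) ↔ x ≠ 0 ∧ y ≠ 0 ∧ partialNum₁ x y = 0 ∧ partialNum₂ x y = 0 := by
  show x ≠ 0 ∧ y ≠ 0 ∧ deriv (fun z => W z y) x = 0 ∧ deriv (fun z => W x z) y = 0 ↔ _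
  refine and_congr_right fun hx => and_congr_right fun hy => ?_
  have h₁ : deriv (fun z => W z y) x = partialNum₁ x y / (x^3*y) := by
    rw [deriv_W_fst y hx, partialNum₁]; field_simp; ring
  have h₂ : deriv (fun z => W x z) y = partialNum₂ x y / (x^2*y^2) := by
    rw [deriv_W_snd x hy, partialNum₂]; field_simp; ring
  simp only [h₁, h₂, div_eq_zero_iff, mul_eq_zero, pow_eq_zero_iff two_ne_zero,
    pow_eq_zero_iff three_ne_zero, hx, hy, or_false]

lemma hessDet_eq {x y : ℂ} (hx : x ≠ 0) (hy : y ≠ 0) :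
    hessDet (x, y) = (2*x^2*(x^2+6*x+1)*(8*x*y^2 + 6*y^2 + 10*x*y + 2*x^4)
      - (4*x*y^2 + 2*y^2 + 6*x^3 + 2*x^4)^2) / (x^6*y^4) := by
  rw [hessDet, deriv_deriv_W_fst y hx, deriv_deriv_W_snd x hy, deriv_deriv_W_fst_snd hx hy]
  field_simp
  ring

noncomputable def eliminant : ℂ[X] :=
  (2*(X^2-1)*(X^2+5*X+1))^2 - (X^2+4*X+1)*(X^2+6*X+1)*(3*X^2-5)^2

lemma eval_eliminant (x : ℂ) : eliminant.eval x
    = (2*(x^2-1)*(x^2+5*x+1))^2 - (x^2+4*x+1)*(x^2+6*x+1)*(3*x^2-5)^2 := by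
  simp [eliminant]

lemma natDegree_eliminant : eliminant.natDegree = 8 := by
  unfold eliminant; compute_degree!

lemma derivative_eliminant : derivative eliminant
    = -210 - 1040*X + 30*X^2 + 2152*X^3 + 850*X^4 - 624*X^5 - 350*X^6 - 40*X^7 := by
  simp only [eliminant, derivative_sub, derivative_add, derivative_mul, derivative_pow, derivative_X,
    derivative_one, derivative_ofNat, Nat.cast_ofNat, C_ofNat, Nat.add_one_sub_one, pow_one, zero_mul,
    mul_one, sub_zero, zero_add, add_zero]
  ring

lemma eval_derivative_eliminant (x : ℂ) : (derivative eliminant).eval x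
    = -210 - 1040*x + 30*x^2 + 2152*x^3 + 850*x^4 - 624*x^5 - 350*x^6 - 40*x^7 := by
  simp [derivative_eliminant]

lemma separable_eliminant : eliminant.Separable := by
  refine separable_of_mul_add_mul_derivative_eq_C (c := 232188716642334176256) (by norm_num)
    (a := 262218863838085780714 + 116857498281657287810*X - 540346533123128155980*X^2
      - 276730092429213875140*X^3 + 153455139386842043682*X^4 + 96451223233975742650*X^5
      + 11342553060654028120*X^6)
    (b := -27327546939248264625 - 138568190729022008495*X - 29788165187435734475*X^2
      + 138829326136141478123*X^3 + 54333223572942849425*X^4 - 26117658780476154457*X^5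
      - 13828676819974159725*X^6 - 1417819132581753515*X^7) ?_
  rw [derivative_eliminant, eliminant, C_ofNat]
  ring

lemma ne_zero_of_eval_eliminant_eq_zero {x : ℂ} (h : eliminant.eval x = 0) :
    x ≠ 0 ∧ x^2+4*x+1 ≠ 0 ∧ x^2+6*x+1 ≠ 0 ∧ 3*x^2-5 ≠ 0 := by
  rw [eval_eliminant] at h
  refine ⟨?_, fun h0 => ?_, fun h0 => ?_, fun h0 => ?_⟩
  · rintro rfl
    norm_num at h
  · have : (48 : ℂ) = 0 := by
      linear_combination (209 + 56*x) * h + (4437 + 27318*x + 6731*x^2 - 27212*x^3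
        - 10885*x^4 + 5094*x^5 + 2725*x^6 + 280*x^7) * h0
    norm_num at this
  · have : (128 : ℂ) = 0 := by
      linear_combination (1189 + 204*x) * h + (25097 + 103392*x + 15671*x^2 - 103228*x^3
        - 38025*x^4 + 19496*x^5 + 10025*x^6 + 1020*x^7) * h0
    norm_num at this
  · have : (1547536 : ℂ) = 0 := by
      linear_combination (35559 - 19440*x) * h + (-458855 - 1411830*x - 3156969*x^2
        + 1245780*x^3 + 1893087*x^4 - 135270*x^5 - 264735*x^6 - 32400*x^7) * h0
    norm_num at this

lemma partialNum_eq_zero_iff {x y : ℂ} (hx : x ≠ 0) :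
    partialNum₁ x y = 0 ∧ partialNum₂ x y = 0 ↔
      eliminant.eval x = 0 ∧ y*((x^2+4*x+1)*(3*x^2-5)) + x*(2*(x^2-1)*(x^2+5*x+1)) = 0 := by
  rw [eval_eliminant, partialNum₁, partialNum₂]
  constructor
  · rintro ⟨h₁, h₂⟩
    have hy : x * (y*((x^2+4*x+1)*(3*x^2-5)) + x*(2*(x^2-1)*(x^2+5*x+1))) = 0 := by
      linear_combination (x^2+4*x+1) * h₁ + (4*x+2) * h₂
    replace hy := (mul_eq_zero.mp hy).resolve_left hx
    refine ⟨?_, hy⟩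
    have hQ : x^2 * ((2*(x^2-1)*(x^2+5*x+1))^2 - (x^2+4*x+1)*(x^2+6*x+1)*(3*x^2-5)^2) = 0 := by
      linear_combination (x*(2*(x^2-1)*(x^2+5*x+1)) - y*((x^2+4*x+1)*(3*x^2-5))) * hy
        + (x^2+4*x+1)*(3*x^2-5)^2 * h₂
    exact (mul_eq_zero.mp hQ).resolve_left (pow_ne_zero 2 hx)
  · rintro ⟨hQ, hy⟩
    obtain ⟨-, hA, -, hD⟩ := ne_zero_of_eval_eliminant_eq_zero (by rwa [eval_eliminant])
    have h₂ : ((x^2+4*x+1)*(3*x^2-5)^2) * (y^2*(x^2+4*x+1) - x^2*(x^2+6*x+1)) = 0 := by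
      linear_combination (y*((x^2+4*x+1)*(3*x^2-5)) - x*(2*(x^2-1)*(x^2+5*x+1))) * hy + x^2 * hQ
    have h₂ := (mul_eq_zero.mp h₂).resolve_left (mul_ne_zero hA (pow_ne_zero 2 hD))
    refine ⟨?_, h₂⟩
    have h₁ : (x^2+4*x+1) * (2*x^4 + 3*x^3*y + 6*x^3 - 4*x*y^2 - 5*x*y - 2*y^2) = 0 := by
      linear_combination x * hy - (4*x+2) * h₂
    exact (mul_eq_zero.mp h₁).resolve_left hA

noncomputable def criticalPoint (x : ℂ) : ℂ × ℂ :=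
  (x, -x*(2*(x^2-1)*(x^2+5*x+1)) / ((x^2+4*x+1)*(3*x^2-5)))

lemma isCritPt_iff_eliminant {x y : ℂ} :
    IsCritPt (x, y) ↔ eliminant.eval x = 0 ∧ (x, y) = criticalPoint x := by
  simp only [criticalPoint, Prod.mk.injEq, true_and]
  constructor
  · intro h
    obtain ⟨hx, -, h₁, h₂⟩ := isCritPt_iff.mp h
    obtain ⟨hQ, hy⟩ := (partialNum_eq_zero_iff hx).mp ⟨h₁, h₂⟩
    obtain ⟨-, hA, -, hD⟩ := ne_zero_of_eval_eliminant_eq_zero hQ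
    refine ⟨hQ, ?_⟩
    rw [eq_div_iff (mul_ne_zero hA hD)]
    linear_combination hy
  · rintro ⟨hQ, rfl⟩
    obtain ⟨hx, hA, hB, hD⟩ := ne_zero_of_eval_eliminant_eq_zero hQ
    have hM : 2*(x^2-1)*(x^2+5*x+1) ≠ 0 := by
      intro hM
      rw [eval_eliminant, hM] at hQ
      simp [hA, hB, hD] at hQ
    refine isCritPt_iff.mpr ⟨hx, div_ne_zero (mul_ne_zero (neg_ne_zero.mpr hx) hM)
      (mul_ne_zero hA hD), (partialNum_eq_zero_iff hx).mpr ⟨hQ, ?_⟩⟩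
    rw [div_mul_cancel₀ _ (mul_ne_zero hA hD)]
    ring

lemma hessDet_numerator_eq {x y : ℂ} (hx : x ≠ 0) (hA : x^2+4*x+1 ≠ 0) (hD : 3*x^2-5 ≠ 0)
    (h₁ : partialNum₁ x y = 0) (h₂ : partialNum₂ x y = 0) (hQ : eliminant.eval x = 0) :
    (x^2+4*x+1)*(3*x^2-5) * (2*x^2*(x^2+6*x+1)*(8*x*y^2 + 6*y^2 + 10*x*y + 2*x^4)
      - (4*x*y^2 + 2*y^2 + 6*x^3 + 2*x^4)^2)
      = -x^4*y*(derivative eliminant).eval x := by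
  rw [partialNum₁] at h₁
  rw [partialNum₂] at h₂
  rw [eval_eliminant] at hQ
  rw [eval_derivative_eliminant]
  set A := x^2+4*x+1
  set D := 3*x^2-5
  set M := 2*(x^2-1)*(x^2+5*x+1)
  set Q' := -210 - 1040*x + 30*x^2 + 2152*x^3 + 850*x^4 - 624*x^5 - 350*x^6 - 40*x^7
  set K₁₁ := 8*x*y^2 + 6*y^2 + 10*x*y + 2*x^4
  set K₁₂ := -(4*x*y^2 + 2*y^2 + 6*x^3 + 2*x^4)
  set K₂₂ := 2*x^2*(x^2+6*x+1)
  set F := x*M - y*(A*D)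
  set C₁₁ := F*A
  set C₁₂ := F*(4*x+2) + x*A*D^2
  -- Differentiating `x³Q = C₁₁P₁ + C₁₂P₂` and `x(yAD + xM) = AP₁ + (4x+2)P₂` at a common zero of
  -- `P₁, P₂` gives `C · K = [[x⁴Q', 0], [*, xyAD]]` for `C = [[C₁₁, C₁₂], [A, 4x+2]]` and
  -- `K = diag(x³y, x²y²) · Hess W · diag(x, y)`; since `det C = -xA²D²`, `det K` is read off.
  have e₁₁ : C₁₁*K₁₁ + C₁₂*K₁₂ = x^4*Q' := by
    linear_combination 3*x^3 * hQ
      - (15*y - 8*x + 160*x*y - 90*x^2 + 435*x^2*y - 252*x^3 + 96*x^3*y - 343*x^4*y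
        + 336*x^5 - 192*x^5*y + 162*x^6 - 27*x^6*y + 20*x^7) * h₁
      - (20*y + 63*x + 180*x*y + 288*x^2 + 336*x^2*y - 225*x^3 - 80*x^3*y - 600*x^4
        - 324*x^4*y + 161*x^5 - 84*x^5*y + 352*x^6 + 81*x^7) * h₂
  have e₁₂ : C₁₁*K₁₂ + C₁₂*K₂₂ = 0 := by
    linear_combination -A*(F - y*(A*D)) * h₁ - ((4*x+2)*(2*F - y*(A*D)) + 2*x*A*D^2) * h₂
  have e₂₂ : A*K₁₂ + (4*x+2)*K₂₂ = x*y*(A*D) := by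
    linear_combination -A * h₁ - 2*(4*x+2) * h₂
  have hdet : -x*A^2*D^2 * (K₁₁*K₂₂ - K₁₂^2) = x^4*Q' * (x*y*(A*D)) := by
    linear_combination (A*K₁₂ + (4*x+2)*K₂₂) * e₁₁ - (A*K₁₁ + (4*x+2)*K₁₂) * e₁₂ + x^4*Q' * e₂₂
  refine mul_left_cancel₀ (mul_ne_zero hx (mul_ne_zero hA hD)) ?_
  linear_combination -hdet

lemma hessDet_eq_of_isCritPt {x y : ℂ} (h : IsCritPt (x, y)) :
    hessDet (x, y) = -(derivative eliminant).eval x / (x^2*y^3*((x^2+4*x+1)*(3*x^2-5))) := by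
  obtain ⟨hx, hy, h₁, h₂⟩ := isCritPt_iff.mp h
  obtain ⟨hQ, -⟩ := (partialNum_eq_zero_iff hx).mp ⟨h₁, h₂⟩
  obtain ⟨-, hA, -, hD⟩ := ne_zero_of_eval_eliminant_eq_zero hQ
  rw [hessDet_eq hx hy, div_eq_div_iff (by positivity) (by simp [hx, hy, hA, hD])]
  linear_combination x^2*y^3 * hessDet_numerator_eq hx hA hD h₁ h₂ hQ

lemma hessDet_ne_zero_of_isCritPt {p : ℂ × ℂ} (h : IsCritPt p) : hessDet p ≠ 0 := by
  obtain ⟨x, y⟩ := p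
  obtain ⟨hQ, -⟩ := isCritPt_iff_eliminant.mp h
  obtain ⟨hx, hy, -, -⟩ := isCritPt_iff.mp h
  obtain ⟨-, hA, -, hD⟩ := ne_zero_of_eval_eliminant_eq_zero hQ
  have hQ' := separable_eliminant.aeval_derivative_ne_zero (x := x) (by simpa using hQ)
  rw [hessDet_eq_of_isCritPt h]
  exact div_ne_zero (neg_ne_zero.mpr (by simpa using hQ')) (by simp [hx, hy, hA, hD])

lemma setOf_isCritPt_eq_image : {p | IsCritPt p} = criticalPoint '' eliminant.rootSet ℂ := by
  have hne : eliminant ≠ 0 := fun h => by simpa [h] using natDegree_eliminant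
  ext ⟨x, y⟩
  change IsCritPt (x, y) ↔ _
  simp only [isCritPt_iff_eliminant, Set.mem_image, mem_rootSet, coe_aeval_eq_eval]
  constructor
  · rintro ⟨hQ, h⟩
    exact ⟨x, ⟨hne, hQ⟩, h.symm⟩
  · rintro ⟨a, ⟨-, hQ⟩, h⟩
    obtain rfl : a = x := congrArg Prod.fst h
    exact ⟨hQ, h.symm⟩

lemma ncard_rootSet_eliminant : (eliminant.rootSet ℂ).ncard = 8 := by
  rw [← Nat.card_coe_set_eq, Nat.card_eq_fintype_card,
    card_rootSet_eq_natDegree separable_eliminant (IsAlgClosed.splits _), natDegree_eliminant]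

/-- `W` has exactly 8 critical points in `(ℂ∖{0})²`, and each of them is
nondegenerate (nonvanishing Hessian determinant). -/
theorem W_critical_points :
    {p : ℂ × ℂ | IsCritPt p}.ncard = 8 ∧
      ∀ p : ℂ × ℂ, IsCritPt p → hessDet p ≠ 0 := by
  refine ⟨?_, fun p => hessDet_ne_zero_of_isCritPt⟩
  rw [setOf_isCritPt_eq_image, Set.ncard_image_of_injective _ fun a b h => congrArg Prod.fst h,
    ncard_rootSet_eliminant]
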